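/- arXiv:1508.03598 — 3 statements merged into one kernel-verified Lean document; each statement's English description precedes it below -/
import Mathlib

section
/- Define r(t) := √((N+1)t) for t > 0, and define f : ℝ^N × (0,∞) → ℝ and ζ : ℝ^N × (0,∞) → ℝ^N by f(x,t) := r(t) + t(N−1)/r(t) if φ°(x) ≤ r(t) and f(x,t) := φ°(x) + t(N−1)/φ°(x) otherwise, and ζ(x,t) := x/r(t) if φ°(x) ≤ r(t) and ζ(x,t) := x/φ°(x) otherwise. Then: (1) f(x,t) → φ°(x) as t ↓ 0 for every x ∈ ℝ^N; (2) for almost every (x,t) ∈ ℝ^N × (0,∞), f is differentiable at (x,t), the map ζ(·,t) is differentiable at x, the equation ∂_t f(x,t) = div_x ζ(x,t) holds (where div_x ζ is the trace of the spatial derivative of ζ(·,t)), and ζ(x,t) ∈ ∂φ(∇_x f(x,t)). In other words, (f,ζ) solves the anisotropic total variation flow ∂_t f = div ζ, ζ ∈ ∂φ(∇f), with initial datum φ°. -/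
open MeasureTheory Set Filter Topology
open scoped RealInnerProductSpace ENNReal

noncomputable section

/-- An anisotropy (norm) on `ℝ^N`: convex, even, positively 1-homogeneous and
positive away from the origin. -/
structure IsAnisoNorm {N : ℕ} (φ : EuclideanSpace ℝ (Fin N) → ℝ) : Prop where
  convexOn : ConvexOn ℝ Set.univ φ
  even : ∀ x, φ (-x) = φ x
  homog : ∀ (c : ℝ) (x : EuclideanSpace ℝ (Fin N)), 0 ≤ c → φ (c • x) = c * φ x
  pos : ∀ x : EuclideanSpace ℝ (Fin N), x ≠ 0 → 0 < φ x

/-- The polar norm `φ°(ξ) = sup {ξ·η : φ(η) ≤ 1}`. -/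
noncomputable def polar {N : ℕ} (φ : EuclideanSpace ℝ (Fin N) → ℝ)
    (ξ : EuclideanSpace ℝ (Fin N)) : ℝ :=
  sSup ((fun η => ⟪ξ, η⟫) '' {η : EuclideanSpace ℝ (Fin N) | φ η ≤ 1})

/-- The subdifferential `∂φ(p) = {v : ∀ q, φ(q) ≥ φ(p) + v·(q-p)}`. -/
def subdiff {N : ℕ} (φ : EuclideanSpace ℝ (Fin N) → ℝ) (p : EuclideanSpace ℝ (Fin N)) :
    Set (EuclideanSpace ℝ (Fin N)) :=
  {v | ∀ q, φ p + ⟪v, q - p⟫ ≤ φ q}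


/-- The explicit solution `f` of the anisotropic total variation flow with initial
datum `φ°`, with `r(t) = √((N+1)t)`. -/
noncomputable def fTV {N : ℕ} (φ : EuclideanSpace ℝ (Fin N) → ℝ)
    (x : EuclideanSpace ℝ (Fin N)) (t : ℝ) : ℝ :=
  if polar φ x ≤ Real.sqrt (((N : ℝ) + 1) * t) then
    Real.sqrt (((N : ℝ) + 1) * t) + t * ((N : ℝ) - 1) / Real.sqrt (((N : ℝ) + 1) * t)
  else
    polar φ x + t * ((N : ℝ) - 1) / polar φ x

/-- The associated vector field `ζ`. -/
noncomputable def zetaTV {N : ℕ} (φ : EuclideanSpace ℝ (Fin N) → ℝ)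
    (x : EuclideanSpace ℝ (Fin N)) (t : ℝ) : EuclideanSpace ℝ (Fin N) :=
  if polar φ x ≤ Real.sqrt (((N : ℝ) + 1) * t) then
    (Real.sqrt (((N : ℝ) + 1) * t))⁻¹ • x
  else
    (polar φ x)⁻¹ • x


/-!
For `t > 0` let `r(t) = √((N + 1) t)`. Inside the Wulff shape `{φ° < r(t)}`, `f(·, t)` is the
constant `2N/(N+1) · r(t)` and `ζ = x / r(t)`, so `∂ₜf = N / r(t) = div ζ`, `∇f = 0`, and
`ζ ∈ ∂φ(0)` because `φ°(ζ) ≤ 1`. Outside, `f = φ° + t(N-1)/φ°` and `ζ = x / φ°(x)`, so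
`∂ₜf = (N-1)/φ° = div ζ` by Euler's identity `⟨x, ∇φ°(x)⟩ = φ°(x)`, and `∇f` is a nonnegative
multiple of `∇φ°`. Since `φ(∇φ°) ≤ 1` (the bipolar inequality, by Hahn–Banach), `ζ ∈ ∂φ(∇f)`.
This covers almost every point: `φ°` is Lipschitz, hence differentiable a.e. by Rademacher's
theorem, and the free boundary `φ°(x) = r(t)` is a graph over `x`, hence null. The initial
datum is attained because `f(x, ·)` is continuous with `f(x, 0) = φ°(x)`.
-/

theorem HasFDerivAt.apply_le_of_eventually_le {F : Type*} [NormedAddCommGroup F]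
    [NormedSpace ℝ F] {f : F → ℝ} {L : F →L[ℝ] ℝ} {x v : F} {c : ℝ} (hf : HasFDerivAt f L x)
    (h : ∀ᶠ s in 𝓝[>] (0 : ℝ), f (x + s • v) ≤ f x + s * c) : L v ≤ c := by
  have hd : HasDerivAt (fun s : ℝ => f (x + s • v)) (L v) 0 := by
    refine HasFDerivAt.comp_hasDerivAt (f := fun s : ℝ => x + s • v) 0 (by simpa using hf) ?_
    simpa using ((hasDerivAt_id (0 : ℝ)).smul_const v).const_add x
  refine le_of_tendsto hd.tendsto_slope_zero_right ?_
  filter_upwards [h, self_mem_nhdsWithin] with s hs (hs0 : 0 < s)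
  rw [zero_add, zero_smul, add_zero, smul_eq_mul, inv_mul_le_iff₀ hs0]
  linarith

theorem HasFDerivAt.trace_fderiv_inv_smul {F : Type*} [NormedAddCommGroup F] [NormedSpace ℝ F]
    [FiniteDimensional ℝ F] {g : F → ℝ} {L : F →L[ℝ] ℝ} {x : F} (hg : HasFDerivAt g L x)
    (hx : g x ≠ 0) :
    LinearMap.trace ℝ F (fderiv ℝ (fun y => (g y)⁻¹ • y) x) =
      Module.finrank ℝ F / g x - L x / g x ^ 2 := by
  have hD : HasFDerivAt (fun y => (g y)⁻¹ • y)
      ((g x)⁻¹ • ContinuousLinearMap.id ℝ F + (-(g x ^ 2)⁻¹ • L).smulRight x) x :=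
    ((hasDerivAt_inv hx).comp_hasFDerivAt x hg).smul (hasFDerivAt_id x)
  rw [hD.fderiv]
  simp only [ContinuousLinearMap.toLinearMap_add, ContinuousLinearMap.toLinearMap_smul,
    ContinuousLinearMap.coe_id, ContinuousLinearMap.coe_smulRight, map_add, map_smul,
    LinearMap.trace_id, smul_eq_mul, LinearMap.trace_smulRight, LinearMap.smul_apply,
    ContinuousLinearMap.coe_coe, neg_mul]
  ring

theorem DifferentiableAt.fderiv_apply_zero_one {F G : Type*} [NormedAddCommGroup F]
    [NormedSpace ℝ F] [NormedAddCommGroup G] [NormedSpace ℝ G] {f : F × ℝ → G} {x : F} {t : ℝ}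
    {f' : G} (hf : DifferentiableAt ℝ f (x, t)) (ht : HasDerivAt (fun τ => f (x, τ)) f' t) :
    fderiv ℝ f (x, t) (0, 1) = f' :=
  (hf.hasFDerivAt.comp_hasDerivAt t ((hasDerivAt_const t x).prodMk (hasDerivAt_id t))).unique ht

theorem ae_snd_ne {α : Type*} [MeasurableSpace α] {μ : Measure α} [SFinite μ] {g : α → ℝ}
    (hg : Measurable g) : ∀ᵐ p ∂μ.prod volume, p.2 ≠ g p.1 :=
  (Measure.ae_prod_iff_ae_ae
      (measurableSet_eq_fun measurable_snd (hg.comp measurable_fst)).compl).2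
    (ae_of_all _ fun x => volume.ae_ne (g x))

/-- Valid for every `t`: when `c * t ≤ 0` both sides vanish, as `t * d / 0 = 0`. -/
theorem sqrt_mul_add_mul_div_sqrt_mul {c : ℝ} (hc : 0 < c) (t d : ℝ) :
    √(c * t) + t * d / √(c * t) = (1 + d / c) * √(c * t) := by
  rcases le_or_gt t 0 with ht | ht
  · simp [Real.sqrt_eq_zero'.2 (mul_nonpos_of_nonneg_of_nonpos hc.le ht)]
  have hs : √(c * t) ^ 2 = c * t := Real.sq_sqrt (by positivity)
  have : 0 < √(c * t) := Real.sqrt_pos.2 (by positivity)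
  field_simp
  linear_combination (-d) * hs

section

variable {N : ℕ} {φ : EuclideanSpace ℝ (Fin N) → ℝ}

local notation "E" => EuclideanSpace ℝ (Fin N)

theorem polar_smul {c : ℝ} (hc : 0 ≤ c) (ξ : E) : polar φ (c • ξ) = c * polar φ ξ := by
  rw [polar, polar, ← smul_eq_mul, ← Real.sSup_smul_of_nonneg hc, ← Set.image_smul,
    Set.image_image]
  simp_rw [real_inner_smul_left, smul_eq_mul]

namespace IsAnisoNorm

theorem map_zero (hφ : IsAnisoNorm φ) : φ 0 = 0 := by
  simpa using hφ.homog 0 0 le_rfl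

protected theorem continuous (hφ : IsAnisoNorm φ) : Continuous φ :=
  continuousOn_univ.mp (hφ.convexOn.continuousOn isOpen_univ)

theorem exists_pos_mul_norm_le (hφ : IsAnisoNorm φ) :
    ∃ m : ℝ, 0 < m ∧ ∀ x : E, m * ‖x‖ ≤ φ x := by
  rcases (Metric.sphere (0 : E) 1).eq_empty_or_nonempty with hS | hS
  · refine ⟨1, one_pos, fun x => ?_⟩
    obtain rfl : x = 0 := by
      by_contra hx
      have : ‖x‖⁻¹ • x ∈ Metric.sphere (0 : E) 1 := by simp [norm_smul, hx]
      simp [hS] at this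
    simp [hφ.map_zero]
  obtain ⟨x₀, hx₀, hmin⟩ :=
    (isCompact_sphere (0 : E) 1).exists_isMinOn hS hφ.continuous.continuousOn
  refine ⟨φ x₀, hφ.pos x₀ (ne_zero_of_mem_unit_sphere ⟨x₀, hx₀⟩), fun x => ?_⟩
  rcases eq_or_ne x 0 with rfl | hx
  · simp [hφ.map_zero]
  have hx' : 0 < ‖x‖ := norm_pos_iff.2 hx
  have : φ x₀ ≤ φ (‖x‖⁻¹ • x) := hmin (by simp [norm_smul, hx])
  rwa [hφ.homog _ _ (by positivity), le_inv_mul_iff₀ hx', mul_comm] at this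

theorem nonneg (hφ : IsAnisoNorm φ) (x : E) : 0 ≤ φ x := by
  obtain ⟨m, hm, hle⟩ := hφ.exists_pos_mul_norm_le
  exact (by positivity : 0 ≤ m * ‖x‖).trans (hle x)

theorem exists_inner_le_mul_norm (hφ : IsAnisoNorm φ) :
    ∃ R : ℝ, ∀ ξ η : E, φ η ≤ 1 → ⟪ξ, η⟫ ≤ R * ‖ξ‖ := by
  obtain ⟨m, hm, hle⟩ := hφ.exists_pos_mul_norm_le
  refine ⟨m⁻¹, fun ξ η hη => ?_⟩
  have : ‖η‖ ≤ m⁻¹ := by simpa using (le_inv_mul_iff₀ hm).2 ((hle η).trans hη)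
  calc ⟪ξ, η⟫ ≤ ‖ξ‖ * ‖η‖ := real_inner_le_norm ξ η
    _ ≤ m⁻¹ * ‖ξ‖ := by rw [mul_comm]; gcongr

theorem bddAbove_inner (hφ : IsAnisoNorm φ) (ξ : E) :
    BddAbove ((fun η => ⟪ξ, η⟫) '' {η : E | φ η ≤ 1}) := by
  obtain ⟨R, hR⟩ := hφ.exists_inner_le_mul_norm
  exact ⟨R * ‖ξ‖, by rintro _ ⟨η, hη, rfl⟩; exact hR ξ η hη⟩

theorem inner_le_polar (hφ : IsAnisoNorm φ) {η : E} (hη : φ η ≤ 1) (ξ : E) :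
    ⟪ξ, η⟫ ≤ polar φ ξ :=
  le_csSup (hφ.bddAbove_inner ξ) ⟨η, hη, rfl⟩

theorem polar_le (hφ : IsAnisoNorm φ) {ξ : E} {M : ℝ}
    (h : ∀ η : E, φ η ≤ 1 → ⟪ξ, η⟫ ≤ M) : polar φ ξ ≤ M :=
  csSup_le ⟨_, 0, by simp [hφ.map_zero], rfl⟩ (by rintro _ ⟨η, hη, rfl⟩; exact h η hη)

theorem polar_nonneg (hφ : IsAnisoNorm φ) (ξ : E) : 0 ≤ polar φ ξ := by
  simpa using hφ.inner_le_polar (η := 0) (by simp [hφ.map_zero]) ξ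

theorem inner_le_polar_mul (hφ : IsAnisoNorm φ) (ξ q : E) : ⟪ξ, q⟫ ≤ polar φ ξ * φ q := by
  rcases eq_or_ne q 0 with rfl | hq
  · simp [hφ.map_zero]
  have hq' : 0 < φ q := hφ.pos q hq
  have := hφ.inner_le_polar (η := (φ q)⁻¹ • q)
    (by rw [hφ.homog _ _ (by positivity), inv_mul_cancel₀ hq'.ne']) ξ
  rwa [real_inner_smul_right, inv_mul_le_iff₀ hq', mul_comm] at this

theorem polar_add_le (hφ : IsAnisoNorm φ) (ξ ξ' : E) :
    polar φ (ξ + ξ') ≤ polar φ ξ + polar φ ξ' :=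
  hφ.polar_le fun η hη => by
    rw [inner_add_left]
    exact add_le_add (hφ.inner_le_polar hη ξ) (hφ.inner_le_polar hη ξ')

theorem exists_lipschitzWith_polar (hφ : IsAnisoNorm φ) : ∃ K, LipschitzWith K (polar φ) := by
  obtain ⟨R, hR⟩ := hφ.exists_inner_le_mul_norm
  refine ⟨_, LipschitzWith.of_le_add_mul' R fun ξ ξ' => ?_⟩
  calc polar φ ξ = polar φ (ξ' + (ξ - ξ')) := by rw [add_sub_cancel]
    _ ≤ polar φ ξ' + polar φ (ξ - ξ') := hφ.polar_add_le _ _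
    _ ≤ polar φ ξ' + R * dist ξ ξ' := by
      rw [dist_eq_norm]
      gcongr
      exact hφ.polar_le (hR _)

theorem continuous_polar (hφ : IsAnisoNorm φ) : Continuous (polar φ) :=
  hφ.exists_lipschitzWith_polar.choose_spec.continuous

theorem le_one_of_inner_le_polar (hφ : IsAnisoNorm φ) {w : E}
    (h : ∀ ξ : E, ⟪ξ, w⟫ ≤ polar φ ξ) : φ w ≤ 1 := by
  by_contra! hw
  obtain ⟨f, u, hfK, hfw⟩ := geometric_hahn_banach_closed_point
    (by simpa using hφ.convexOn.convex_le 1)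
    (isClosed_le hφ.continuous continuous_const) (x := w) (by simpa using hw)
  set ξ := (InnerProductSpace.toDual ℝ E).symm f
  have hf : ∀ y, f y = ⟪ξ, y⟫ := fun y => InnerProductSpace.toDual_symm_apply.symm
  have hξ : polar φ ξ ≤ u := hφ.polar_le fun η hη => by rw [← hf]; exact (hfK η hη).le
  have hξw := h ξ
  rw [← hf] at hξw
  linarith

theorem apply_le_polar_of_hasFDerivAt (hφ : IsAnisoNorm φ) {x : E} {L : E →L[ℝ] ℝ}
    (hL : HasFDerivAt (polar φ) L x) (v : E) : L v ≤ polar φ v :=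
  hL.apply_le_of_eventually_le <| eventually_mem_nhdsWithin.mono fun s (hs : 0 < s) => by
    rw [← polar_smul hs.le]
    exact hφ.polar_add_le _ _

theorem apply_self_of_hasFDerivAt_polar (hφ : IsAnisoNorm φ) {x : E} {L : E →L[ℝ] ℝ}
    (hL : HasFDerivAt (polar φ) L x) : L x = polar φ x := by
  have h : L (-x) ≤ -polar φ x := hL.apply_le_of_eventually_le <|
    eventually_of_mem (Ioo_mem_nhdsGT one_pos) fun s hs => by
      rw [show x + s • -x = (1 - s) • x by module, polar_smul (by linarith [hs.2])]
      linarith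
  rw [map_neg] at h
  linarith [hφ.apply_le_polar_of_hasFDerivAt hL x]

theorem inner_gradient_polar_self (hφ : IsAnisoNorm φ) {x : E}
    (hd : DifferentiableAt ℝ (polar φ) x) : ⟪x, gradient (polar φ) x⟫ = polar φ x := by
  rw [real_inner_comm, gradient, InnerProductSpace.toDual_symm_apply]
  exact hφ.apply_self_of_hasFDerivAt_polar hd.hasFDerivAt

theorem gradient_polar_le_one (hφ : IsAnisoNorm φ) {x : E}
    (hd : DifferentiableAt ℝ (polar φ) x) : φ (gradient (polar φ) x) ≤ 1 :=
  hφ.le_one_of_inner_le_polar fun ξ => by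
    rw [real_inner_comm, gradient, InnerProductSpace.toDual_symm_apply]
    exact hφ.apply_le_polar_of_hasFDerivAt hd.hasFDerivAt ξ

theorem mem_subdiff_of_polar_le_one (hφ : IsAnisoNorm φ) {v p : E} (hv : polar φ v ≤ 1)
    (hp : φ p ≤ ⟪v, p⟫) : v ∈ subdiff φ p := fun q => by
  have := hφ.inner_le_polar_mul v q
  have := mul_le_of_le_one_left (hφ.nonneg q) hv
  rw [inner_sub_right]
  linarith

end IsAnisoNorm

theorem fTV_of_le {x : E} {t : ℝ} (h : polar φ x ≤ √((N + 1) * t)) :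
    fTV φ x t = 2 * N / (N + 1) * √((N + 1) * t) := by
  rw [fTV, if_pos h, sqrt_mul_add_mul_div_sqrt_mul (by positivity)]
  congr 1
  field_simp
  ring

theorem fTV_of_lt {x : E} {t : ℝ} (h : √((N + 1) * t) < polar φ x) :
    fTV φ x t = polar φ x + t * (N - 1) / polar φ x :=
  if_neg h.not_ge

theorem zetaTV_of_le {x : E} {t : ℝ} (h : polar φ x ≤ √((N + 1) * t)) :
    zetaTV φ x t = (√((N + 1) * t))⁻¹ • x :=
  if_pos h

theorem zetaTV_of_lt {x : E} {t : ℝ} (h : √((N + 1) * t) < polar φ x) :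
    zetaTV φ x t = (polar φ x)⁻¹ • x :=
  if_neg h.not_ge

theorem continuous_fTV (x : E) : Continuous (fTV φ x) := by
  refine Continuous.if_le ?_ (by fun_prop) continuous_const (by fun_prop) fun t h => by rw [h]
  simp_rw [sqrt_mul_add_mul_div_sqrt_mul (by positivity : (0 : ℝ) < N + 1)]
  fun_prop

theorem fTV_zero (hφ : IsAnisoNorm φ) (x : E) : fTV φ x 0 = polar φ x := by
  rcases (hφ.polar_nonneg x).eq_or_lt with h | h
  · rw [fTV_of_le (by simp [← h]), ← h]
    simp
  · rw [fTV_of_lt (by simpa using h)]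
    simp

theorem tendsto_fTV (hφ : IsAnisoNorm φ) (x : E) :
    Tendsto (fTV φ x) (𝓝[>] 0) (𝓝 (polar φ x)) :=
  fTV_zero hφ x ▸ ((continuous_fTV x).tendsto 0).mono_left nhdsWithin_le_nhds

theorem gradient_fTV_of_lt_polar {x : E} {t : ℝ} (h : √((N + 1) * t) < polar φ x)
    (hd : DifferentiableAt ℝ (polar φ) x) :
    gradient (fun y => fTV φ y t) x =
      (1 - t * (N - 1) / polar φ x ^ 2) • gradient (polar φ) x := by
  have ha : polar φ x ≠ 0 := (h.trans_le' (Real.sqrt_nonneg _)).ne'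
  have hG : (fun y => fTV φ y t) =ᶠ[𝓝 x] fun y => polar φ y + t * (N - 1) / polar φ y :=
    (continuousAt_const.eventually_lt hd.continuousAt h).mono fun y hy => fTV_of_lt hy
  have hh : HasDerivAt (fun b : ℝ => b + t * (N - 1) / b) (1 - t * (N - 1) / polar φ x ^ 2)
      (polar φ x) :=
    ((hasDerivAt_id _).add ((hasDerivAt_const _ (t * (N - 1))).div
      (hasDerivAt_id (polar φ x)) ha)).congr_deriv
      (by simp only [id, zero_mul, zero_sub, mul_one]; ring)
  have hGd : HasFDerivAt (fun y => polar φ y + t * (N - 1) / polar φ y)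
      ((1 - t * (N - 1) / polar φ x ^ 2) • fderiv ℝ (polar φ) x) x :=
    hh.comp_hasFDerivAt x hd.hasFDerivAt
  rw [gradient, hG.fderiv_eq, hGd.fderiv, map_smul]
  rfl

def SolvesFlowAt (φ : E → ℝ) (p : E × ℝ) : Prop :=
  DifferentiableAt ℝ (fun q : E × ℝ => fTV φ q.1 q.2) p ∧
  DifferentiableAt ℝ (fun y => zetaTV φ y p.2) p.1 ∧
  fderiv ℝ (fun q : E × ℝ => fTV φ q.1 q.2) p (0, 1) =
    LinearMap.trace ℝ E ↑(fderiv ℝ (fun y => zetaTV φ y p.2) p.1) ∧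
  zetaTV φ p.1 p.2 ∈ subdiff φ (gradient (fun y => fTV φ y p.2) p.1)

theorem solvesFlowAt_of_polar_lt (hφ : IsAnisoNorm φ) {x : E} {t : ℝ} (ht : 0 < t)
    (h : polar φ x < √((N + 1) * t)) : SolvesFlowAt φ (x, t) := by
  have hs : 0 < √((N + 1) * t) := Real.sqrt_pos.2 (by positivity)
  have hF : (fun q : E × ℝ => fTV φ q.1 q.2) =ᶠ[𝓝 (x, t)]
      fun q => 2 * N / (N + 1) * √((N + 1) * q.2) :=
    ((hφ.continuous_polar.comp continuous_fst).continuousAt.eventually_lt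
      (by fun_prop) h).mono fun q hq => fTV_of_le hq.le
  have hFt : HasDerivAt (fun τ : ℝ => 2 * N / (N + 1) * √((N + 1) * τ))
      (N / √((N + 1) * t)) t := by
    have hlin : HasDerivAt (fun τ : ℝ => (N + 1) * τ) (N + 1) t := by
      simpa using (hasDerivAt_id t).const_mul ((N : ℝ) + 1)
    refine ((hlin.sqrt (by positivity)).const_mul (2 * N / (N + 1 : ℝ))).congr_deriv ?_
    field_simp
  have hFd : DifferentiableAt ℝ (fun q : E × ℝ => 2 * N / (N + 1) * √((N + 1) * q.2)) (x, t) :=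
    DifferentiableAt.comp (g := fun τ : ℝ => 2 * N / (N + 1) * √((N + 1) * τ)) (x, t)
      hFt.differentiableAt differentiableAt_snd
  have hV : ∀ᶠ y in 𝓝 x, polar φ y < √((N + 1) * t) :=
    hφ.continuous_polar.continuousAt.eventually_lt continuousAt_const h
  have hZ : (fun y => zetaTV φ y t) =ᶠ[𝓝 x] fun y => (√((N + 1) * t))⁻¹ • y :=
    hV.mono fun y hy => zetaTV_of_le hy.le
  have hgrad : gradient (fun y => fTV φ y t) x = 0 := by
    have hG : (fun y => fTV φ y t) =ᶠ[𝓝 x] fun _ => 2 * N / (N + 1) * √((N + 1) * t) :=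
      hV.mono fun y hy => fTV_of_le hy.le
    simp [gradient, hG.fderiv_eq]
  refine ⟨hF.differentiableAt_iff.2 hFd, hZ.differentiableAt_iff.2 (by fun_prop), ?_, ?_⟩
  · rw [hF.fderiv_eq, hFd.fderiv_apply_zero_one hFt, hZ.fderiv_eq,
      (hasFDerivAt_const _ x).trace_fderiv_inv_smul hs.ne']
    simp
  · rw [hgrad, zetaTV_of_le h.le]
    refine hφ.mem_subdiff_of_polar_le_one ?_ (by simp [hφ.map_zero])
    rw [polar_smul (by positivity), inv_mul_le_one₀ hs]
    exact h.le

theorem solvesFlowAt_of_lt_polar (hφ : IsAnisoNorm φ) {x : E} {t : ℝ} (ht : 0 < t)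
    (h : √((N + 1) * t) < polar φ x) (hd : DifferentiableAt ℝ (polar φ) x) :
    SolvesFlowAt φ (x, t) := by
  have ha : 0 < polar φ x := h.trans_le' (Real.sqrt_nonneg _)
  have hF : (fun q : E × ℝ => fTV φ q.1 q.2) =ᶠ[𝓝 (x, t)]
      fun q => polar φ q.1 + q.2 * (N - 1) / polar φ q.1 :=
    ((by fun_prop : Continuous fun q : E × ℝ => √((N + 1) * q.2)).continuousAt.eventually_lt
      (hφ.continuous_polar.comp continuous_fst).continuousAt h).mono fun q hq => fTV_of_lt hq
  have hFt : HasDerivAt (fun τ => polar φ x + τ * (N - 1) / polar φ x)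
      ((N - 1) / polar φ x) t := by
    simpa using (((hasDerivAt_id t).mul_const ((N : ℝ) - 1)).div_const _).const_add (polar φ x)
  have hFd : DifferentiableAt ℝ
      (fun q : E × ℝ => polar φ q.1 + q.2 * (N - 1) / polar φ q.1) (x, t) := by
    fun_prop (disch := exact ha.ne')
  have hZ : (fun y => zetaTV φ y t) =ᶠ[𝓝 x] fun y => (polar φ y)⁻¹ • y :=
    (continuousAt_const.eventually_lt hd.continuousAt h).mono fun y hy => zetaTV_of_lt hy
  refine ⟨hF.differentiableAt_iff.2 hFd,
    hZ.differentiableAt_iff.2 ((hd.inv ha.ne').smul differentiableAt_id), ?_, ?_⟩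
  · rw [hF.fderiv_eq, hFd.fderiv_apply_zero_one hFt, hZ.fderiv_eq,
      hd.hasFDerivAt.trace_fderiv_inv_smul ha.ne',
      hφ.apply_self_of_hasFDerivAt_polar hd.hasFDerivAt]
    simp only [finrank_euclideanSpace, Fintype.card_fin]
    field_simp
  · rw [gradient_fTV_of_lt_polar h hd, zetaTV_of_lt h]
    have hκ : 0 ≤ 1 - t * (N - 1) / polar φ x ^ 2 := by
      have := (Real.sqrt_lt' ha).1 h
      exact sub_nonneg.2 ((div_le_one (by positivity)).2 (by nlinarith))
    refine hφ.mem_subdiff_of_polar_le_one ?_ ?_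
    · rw [polar_smul (by positivity), inv_mul_cancel₀ ha.ne']
    · rw [hφ.homog _ _ hκ, real_inner_smul_left, real_inner_smul_right,
        hφ.inner_gradient_polar_self hd]
      calc _ ≤ 1 - t * (N - 1) / polar φ x ^ 2 :=
            mul_le_of_le_one_right hκ (hφ.gradient_polar_le_one hd)
        _ = _ := by field_simp

theorem ae_solvesFlowAt (hφ : IsAnisoNorm φ) :
    ∀ᵐ p ∂volume.restrict ((univ : Set E) ×ˢ Ioi (0 : ℝ)), SolvesFlowAt φ p := by
  have hgraph : ∀ᵐ p : E × ℝ, p.2 ≠ polar φ p.1 ^ 2 / (N + 1) :=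
    Measure.volume_eq_prod E ℝ ▸ ae_snd_ne ((hφ.continuous_polar.pow 2).div_const _).measurable
  have hdiff : ∀ᵐ p : E × ℝ, DifferentiableAt ℝ (polar φ) p.1 :=
    Measure.volume_eq_prod E ℝ ▸ Measure.quasiMeasurePreserving_fst.ae
      hφ.exists_lipschitzWith_polar.choose_spec.ae_differentiableAt
  filter_upwards [ae_restrict_mem (MeasurableSet.univ.prod measurableSet_Ioi),
    ae_restrict_of_ae hgraph, ae_restrict_of_ae hdiff] with ⟨x, t⟩ hp hne hd
  have ht : 0 < t := hp.2
  rcases lt_trichotomy (polar φ x) √((N + 1) * t) with h | h | h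
  · exact solvesFlowAt_of_polar_lt hφ ht h
  · refine absurd ?_ hne
    rw [h, Real.sq_sqrt (by positivity)]
    field_simp
  · exact solvesFlowAt_of_lt_polar hφ ht h hd

end

theorem statement2_general {N : ℕ} (φ : EuclideanSpace ℝ (Fin N) → ℝ)
    (hφ : IsAnisoNorm φ) :
    (∀ x : EuclideanSpace ℝ (Fin N),
      Filter.Tendsto (fun t => fTV φ x t) (nhdsWithin 0 (Set.Ioi 0)) (nhds (polar φ x))) ∧
    (∀ᵐ p ∂(volume.restrict ((Set.univ : Set (EuclideanSpace ℝ (Fin N))) ×ˢ Set.Ioi (0 : ℝ))),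
      DifferentiableAt ℝ (fun q : EuclideanSpace ℝ (Fin N) × ℝ => fTV φ q.1 q.2) p ∧
      DifferentiableAt ℝ (fun y => zetaTV φ y p.2) p.1 ∧
      fderiv ℝ (fun q : EuclideanSpace ℝ (Fin N) × ℝ => fTV φ q.1 q.2) p (0, 1) =
        LinearMap.trace ℝ (EuclideanSpace ℝ (Fin N))
          ↑(fderiv ℝ (fun y => zetaTV φ y p.2) p.1) ∧
      zetaTV φ p.1 p.2 ∈ subdiff φ (gradient (fun y => fTV φ y p.2) p.1)) :=
  ⟨tendsto_fTV hφ, ae_solvesFlowAt hφ⟩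

theorem statement2 {N : ℕ} (hN : 0 < N) (φ : EuclideanSpace ℝ (Fin N) → ℝ)
    (hφ : IsAnisoNorm φ) :
    (∀ x : EuclideanSpace ℝ (Fin N),
      Filter.Tendsto (fun t => fTV φ x t) (nhdsWithin 0 (Set.Ioi 0)) (nhds (polar φ x))) ∧
    (∀ᵐ p ∂(volume.restrict ((Set.univ : Set (EuclideanSpace ℝ (Fin N))) ×ˢ Set.Ioi (0 : ℝ))),
      DifferentiableAt ℝ (fun q : EuclideanSpace ℝ (Fin N) × ℝ => fTV φ q.1 q.2) p ∧
      DifferentiableAt ℝ (fun y => zetaTV φ y p.2) p.1 ∧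
      fderiv ℝ (fun q : EuclideanSpace ℝ (Fin N) × ℝ => fTV φ q.1 q.2) p (0, 1) =
        LinearMap.trace ℝ (EuclideanSpace ℝ (Fin N))
          ↑(fderiv ℝ (fun y => zetaTV φ y p.2) p.1) ∧
      zetaTV φ p.1 p.2 ∈ subdiff φ (gradient (fun y => fTV φ y p.2) p.1)) :=
  statement2_general φ hφ
end
end

section
/- Let C ≥ 0 and let d : [0,∞) → ℝ satisfy the following two conditions: (i) whenever 0 ≤ t ≤ s, d(t) > 0 and C(s−t) < d(t)², then d(s) ≥ √(d(t)² − C(s−t)); (ii) whenever 0 ≤ t ≤ s, d(t) < 0 and C(s−t) < d(t)², then d(s) ≤ −√(d(t)² − C(s−t)). Then d admits a finite right limit lim_{s↓t} d(s) at every t ≥ 0, and a finite left limit lim_{s↑t} d(s) at every t > 0. -/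
/-!
Condition (i) makes `(d s)⁺ ^ 2 + C * s` nondecreasing on `[0, ∞)`: while `d` is positive its
square drops at rate at most `C`, and once the root in (i) is no longer real the value at `t`
is already at most `C * s`. A monotone function has one-sided limits, hence so does
`(d s)⁺ = √(((d s)⁺ ^ 2 + C * s) - C * s)`. Condition (ii) is condition (i) for `-d`, and
`d = d⁺ - (-d)⁺`.
-/

open Filter Topology Set

theorem MonotoneOn.exists_tendsto_nhdsGT_of_Ici {α β : Type*} [LinearOrder α] [TopologicalSpace α]
    [OrderTopology α] [ConditionallyCompleteLinearOrder β] [TopologicalSpace β] [OrderTopology β]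
    {f : α → β} {a t : α} (hf : MonotoneOn f (Ici a)) (ht : a ≤ t) :
    ∃ L, Tendsto f (𝓝[>] t) (𝓝 L) := by
  have hsub : Ioi t ⊆ Ici a := fun s hs => ht.trans hs.le
  refine ⟨_, (hf.mono hsub).tendsto_nhdsGT ⟨f t, ?_⟩⟩
  rintro _ ⟨s, hs, rfl⟩
  exact hf ht (hsub hs) hs.le

theorem MonotoneOn.exists_tendsto_nhdsLT_of_Ici {α β : Type*} [LinearOrder α] [TopologicalSpace α]
    [OrderTopology α] [DenselyOrdered α] [ConditionallyCompleteLinearOrder β] [TopologicalSpace β]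
    [OrderTopology β] {f : α → β} {a t : α} (hf : MonotoneOn f (Ici a)) (ht : a < t) :
    ∃ L, Tendsto f (𝓝[<] t) (𝓝 L) := by
  have hsub : Ioo a t ⊆ Ici a := Ioo_subset_Ico_self.trans Ico_subset_Ici_self
  refine ⟨_, (hf.mono hsub).tendsto_nhdsWithin_Ioo_left (nonempty_Ioo.2 ht) ⟨f t, ?_⟩⟩
  rintro _ ⟨s, hs, rfl⟩
  exact hf (hsub hs) ht.le hs.2.le

def SqrtDecayBound (C : ℝ) (e : ℝ → ℝ) : Prop :=
  ∀ t s : ℝ, 0 ≤ t → t ≤ s → 0 < e t → C * (s - t) < e t ^ 2 →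
    Real.sqrt (e t ^ 2 - C * (s - t)) ≤ e s

section

variable {C : ℝ} {e : ℝ → ℝ}

theorem sqrtDecayBound_neg
    (he : ∀ t s : ℝ, 0 ≤ t → t ≤ s → e t < 0 → C * (s - t) < e t ^ 2 →
      e s ≤ -Real.sqrt (e t ^ 2 - C * (s - t))) :
    SqrtDecayBound C (fun s => -e s) := by
  intro t s ht hts hpos hlt
  rw [neg_sq] at hlt ⊢
  linarith [he t s ht hts (neg_pos.1 hpos) hlt]

theorem SqrtDecayBound.monotoneOn_sq_posPart_add_mul (he : SqrtDecayBound C e) (hC : 0 ≤ C) :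
    MonotoneOn (fun s => (e s)⁺ ^ 2 + C * s) (Ici 0) := by
  intro t ht s _ hts
  dsimp only
  have hCts : C * t ≤ C * s := mul_le_mul_of_nonneg_left hts hC
  have hs := sq_nonneg (e s)⁺
  rcases le_or_gt (e t) 0 with hneg | hpos
  · simp only [posPart_eq_zero.2 hneg]
    linarith
  rw [posPart_eq_self.2 hpos.le]
  rcases lt_or_ge (C * (s - t)) (e t ^ 2) with hsmall | hbig
  · have hsq : e t ^ 2 - C * (s - t) ≤ (e s)⁺ ^ 2 :=
      (Real.sqrt_le_left (posPart_nonneg _)).1 ((he t s ht hts hpos hsmall).trans (le_posPart _))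
    linarith
  · linarith

theorem exists_tendsto_posPart_of_tendsto_sq_add_mul {l : Filter ℝ} {t A : ℝ}
    (hl : l ≤ 𝓝 t) (hA : Tendsto (fun s => (e s)⁺ ^ 2 + C * s) l (𝓝 A)) :
    ∃ L, Tendsto (fun s => (e s)⁺) l (𝓝 L) := by
  have hlin : Tendsto (fun s => C * s) l (𝓝 (C * t)) :=
    ((continuous_const.mul continuous_id).tendsto t).mono_left hl
  refine ⟨_, ((Real.continuous_sqrt.tendsto _).comp (hA.sub hlin)).congr fun s => ?_⟩
  simp [Real.sqrt_sq (posPart_nonneg _)]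

theorem SqrtDecayBound.exists_tendsto_posPart_nhdsGT (he : SqrtDecayBound C e) (hC : 0 ≤ C)
    {t : ℝ} (ht : 0 ≤ t) : ∃ L, Tendsto (fun s => (e s)⁺) (𝓝[>] t) (𝓝 L) := by
  obtain ⟨A, hA⟩ := (he.monotoneOn_sq_posPart_add_mul hC).exists_tendsto_nhdsGT_of_Ici ht
  exact exists_tendsto_posPart_of_tendsto_sq_add_mul nhdsWithin_le_nhds hA

theorem SqrtDecayBound.exists_tendsto_posPart_nhdsLT (he : SqrtDecayBound C e) (hC : 0 ≤ C)
    {t : ℝ} (ht : 0 < t) : ∃ L, Tendsto (fun s => (e s)⁺) (𝓝[<] t) (𝓝 L) := by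
  obtain ⟨A, hA⟩ := (he.monotoneOn_sq_posPart_add_mul hC).exists_tendsto_nhdsLT_of_Ici ht
  exact exists_tendsto_posPart_of_tendsto_sq_add_mul nhdsWithin_le_nhds hA

end

/-- A real function on `[0,∞)` satisfying the two square-root lower/upper persistence
bounds admits finite one-sided limits at every point. -/
theorem statement15 (C : ℝ) (hC : 0 ≤ C) (d : ℝ → ℝ)
    (h1 : ∀ t s : ℝ, 0 ≤ t → t ≤ s → 0 < d t → C * (s - t) < (d t) ^ 2 →
      Real.sqrt ((d t) ^ 2 - C * (s - t)) ≤ d s)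
    (h2 : ∀ t s : ℝ, 0 ≤ t → t ≤ s → d t < 0 → C * (s - t) < (d t) ^ 2 →
      d s ≤ -Real.sqrt ((d t) ^ 2 - C * (s - t))) :
    (∀ t : ℝ, 0 ≤ t → ∃ L : ℝ, Tendsto d (nhdsWithin t (Set.Ioi t)) (nhds L)) ∧
    (∀ t : ℝ, 0 < t → ∃ L : ℝ, Tendsto d (nhdsWithin t (Set.Ico 0 t)) (nhds L)) := by
  have hpos : SqrtDecayBound C d := h1
  have hneg : SqrtDecayBound C (fun s => -d s) := sqrtDecayBound_neg h2
  refine ⟨fun t ht => ?_, fun t ht => ?_⟩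
  · obtain ⟨A, hA⟩ := hpos.exists_tendsto_posPart_nhdsGT hC ht
    obtain ⟨B, hB⟩ := hneg.exists_tendsto_posPart_nhdsGT hC ht
    exact ⟨A - B, by simpa only [posPart_neg, posPart_sub_negPart] using hA.sub hB⟩
  · obtain ⟨A, hA⟩ := hpos.exists_tendsto_posPart_nhdsLT hC ht
    obtain ⟨B, hB⟩ := hneg.exists_tendsto_posPart_nhdsLT hC ht
    refine ⟨A - B, ?_⟩
    simpa only [posPart_neg, posPart_sub_negPart] using
      (hA.sub hB).mono_left (nhdsWithin_mono _ Ico_subset_Iio_self)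
end

section
/- Let p ≥ 1 be a real number, K ≥ 0, T > 0, and let y : [0,T] → ℝ be differentiable with y(t) ≥ 0 for all t ∈ [0,T], y(0) = 0, and y'(t) ≤ K · y(t)^{1 − 1/p} for all t ∈ [0,T]. Then y(t) ≤ (K t / p)^p for all t ∈ [0,T]. -/
/-- A Gronwall-type ODE lemma: if `y ≥ 0`, `y(0) = 0` and `y' ≤ K y^(1-1/p)` on `[0,T]`,
then `y(t) ≤ (K t / p)^p` on `[0,T]`. -/
theorem statement17 (p K T : ℝ) (hp : 1 ≤ p) (hK : 0 ≤ K) (hT : 0 < T)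
    (y y' : ℝ → ℝ) (hderiv : ∀ t ∈ Set.Icc (0 : ℝ) T, HasDerivAt y (y' t) t)
    (hy_nonneg : ∀ t ∈ Set.Icc (0 : ℝ) T, 0 ≤ y t) (hy0 : y 0 = 0)
    (hineq : ∀ t ∈ Set.Icc (0 : ℝ) T, y' t ≤ K * (y t) ^ (1 - 1 / p)) :
    ∀ t ∈ Set.Icc (0 : ℝ) T, y t ≤ (K * t / p) ^ p := by
  have hp0 : (0 : ℝ) < p := lt_of_lt_of_le one_pos hp
  -- Step 1: for every ε > 0, y t ≤ ((K+ε)/p * t + ε)^p on [0,T]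
  have key : ∀ ε : ℝ, 0 < ε → ∀ t ∈ Set.Icc (0 : ℝ) T,
      y t ≤ ((K + ε) / p * t + ε) ^ p := by
    intro ε hε
    set c : ℝ := (K + ε) / p with hc
    have hc0 : 0 ≤ c := div_nonneg (by linarith) hp0.le
    have hbase : ∀ x ∈ Set.Icc (0 : ℝ) T, 0 < c * x + ε := fun x hx =>
      lt_of_lt_of_le hε (by nlinarith [mul_nonneg hc0 hx.1])
    have hB : ∀ x : ℝ, HasDerivAt (fun t => (c * t + ε) ^ p)
        ((K + ε) * (c * x + ε) ^ (p - 1)) x := by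
      intro x
      have h1 : HasDerivAt (fun t => c * t + ε) c x := by
        simpa using ((hasDerivAt_id x).const_mul c).add_const ε
      have := h1.rpow_const (p := p) (Or.inr hp)
      convert this using 1
      rw [hc]
      field_simp
    have := image_le_of_deriv_right_lt_deriv_boundary
      (f := y) (f' := y') (a := 0) (b := T)
      (fun x hx => (hderiv x hx).continuousAt.continuousWithinAt)
      (fun x hx => (hderiv x (Set.mem_Icc.2 ⟨hx.1, hx.2.le⟩)).hasDerivWithinAt)
      (B := fun t => (c * t + ε) ^ p) (B' := fun x => (K + ε) * (c * x + ε) ^ (p - 1))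
      (by
        simp only [mul_zero, zero_add, hy0]
        exact Real.rpow_nonneg hε.le p)
      hB
      (by
        intro x hx hxe
        have hxIcc : x ∈ Set.Icc (0 : ℝ) T := Set.mem_Icc.2 ⟨hx.1, hx.2.le⟩
        have hb : 0 < c * x + ε := hbase x hxIcc
        have h1 : y' x ≤ K * (y x) ^ (1 - 1 / p) := hineq x hxIcc
        have h2 : (y x) ^ (1 - 1 / p) = (c * x + ε) ^ (p - 1) := by
          rw [hxe]
          show ((c * x + ε) ^ p) ^ (1 - 1 / p) = (c * x + ε) ^ (p - 1)
          rw [← Real.rpow_mul hb.le]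
          congr 1
          field_simp
        have h3 : 0 < (c * x + ε) ^ (p - 1) := Real.rpow_pos_of_pos hb _
        calc y' x ≤ K * (c * x + ε) ^ (p - 1) := by rw [← h2]; exact h1
          _ < (K + ε) * (c * x + ε) ^ (p - 1) := by nlinarith)
    exact fun t ht => this ht
  -- Step 2: pass to the limit ε → 0⁺
  intro t ht
  have hlim : Filter.Tendsto (fun ε : ℝ => ((K + ε) / p * t + ε) ^ p)
      (nhdsWithin 0 (Set.Ioi 0)) (nhds ((K * t / p) ^ p)) := by
    have hb : Filter.Tendsto (fun ε : ℝ => (K + ε) / p * t + ε)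
        (nhdsWithin 0 (Set.Ioi 0)) (nhds (K * t / p)) := by
      have : ContinuousAt (fun ε : ℝ => (K + ε) / p * t + ε) 0 := by fun_prop
      have h : Filter.Tendsto (fun ε : ℝ => (K + ε) / p * t + ε)
          (nhdsWithin 0 (Set.Ioi 0)) (nhds ((K + 0) / p * t + 0)) :=
        this.tendsto.mono_left nhdsWithin_le_nhds
      simpa [add_zero, div_mul_eq_mul_div] using h
    have hcont : ContinuousAt (fun x : ℝ => x ^ p) (K * t / p) :=
      Real.continuousAt_rpow_const _ p (Or.inr hp0.le)
    exact hcont.tendsto.comp hb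
  refine ge_of_tendsto hlim ?_
  filter_upwards [self_mem_nhdsWithin] with ε hε
  exact key ε hε t ht
end
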